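/- For i ∈ {1, 2}, let Σᵢ be the system ẋᵢ = fᵢ(xᵢ) + Bᵢuᵢ, yᵢ = Cᵢxᵢ, with fᵢ: ℝ^{nᵢ} → ℝ^{nᵢ} continuously differentiable, Bᵢ ∈ ℝ^{nᵢ×mᵢ}, Cᵢ ∈ ℝ^{lᵢ×nᵢ}, and with l₁ = m₂ and l₂ = m₁. Fix λ ≥ 0 and suppose that for each i there exist γᵢ > 0, εᵢ > 0, and a symmetric matrix Pᵢ ∈ ℝ^{nᵢ×nᵢ} with inertia (pᵢ, 0, nᵢ−pᵢ) such that for every xᵢ ∈ ℝ^{nᵢ} the block matrix [[Dfᵢ(xᵢ)ᵀPᵢ + Pᵢ·Dfᵢ(xᵢ) + 2λPᵢ + εᵢI + CᵢᵀCᵢ, PᵢBᵢ], [BᵢᵀPᵢ, −γᵢ²I]] is negative semidefinite. If γ₁γ₂ < 1, then the closed-loop system obtained from the feedback interconnection u₁ = −y₂, u₂ = y₁, namely ẋ₁ = f₁(x₁) − B₁C₂x₂, ẋ₂ = f₂(x₂) + B₂C₁x₁ with state x = (x₁, x₂) and vector field F(x₁, x₂) = (f₁(x₁) − B₁C₂x₂,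 f₂(x₂) + B₂C₁x₁), is strictly (p₁+p₂)-dominant with rate λ: there exist ε > 0 and a symmetric matrix P ∈ ℝ^{(n₁+n₂)×(n₁+n₂)} with inertia (p₁+p₂, 0, n₁+n₂−p₁−p₂) such that DF(x)ᵀP + P·DF(x) + 2λP ≼ −εI for all x ∈ ℝ^{n₁+n₂}. -/

import Mathlib

open Matrix Polynomial

open scoped Classical in
/-- Number of eigenvalues (roots of the complex characteristic polynomial, counted with
algebraic multiplicity) of a real matrix satisfying a predicate. -/
noncomputable def eigCount {n : Type*} [Fintype n] [DecidableEq n]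
    (A : Matrix n n ℝ) (p : ℂ → Prop) : ℕ :=
  Multiset.card (((A.map (Complex.ofReal)).charpoly.roots).filter p)

/-- A real symmetric matrix has inertia `(neg, 0, pos)`: `neg` negative eigenvalues,
no zero eigenvalues, and `pos` positive eigenvalues, counted with multiplicity. -/
def hasInertia {n : Type*} [Fintype n] [DecidableEq n]
    (P : Matrix n n ℝ) (neg pos : ℕ) : Prop :=
  eigCount P (fun z => z.re < 0) = neg ∧
  eigCount P (fun z => z.re = 0) = 0 ∧
  eigCount P (fun z => 0 < z.re) = pos

/-- Jacobian matrix of a map `f : ℝⁿ → ℝⁿ` at `x`. -/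
noncomputable def jacobian {n : Type*} [Fintype n] [DecidableEq n]
    (f : (n → ℝ) → (n → ℝ)) (x : n → ℝ) : Matrix n n ℝ :=
  LinearMap.toMatrix' (fderiv ℝ f x).toLinearMap

/-- Largest singular value of a complex matrix (its ℓ² → ℓ² operator norm). -/
noncomputable def sigmaMax {l m : Type*} [Fintype l] [Fintype m] [DecidableEq m]
    (M : Matrix l m ℂ) : ℝ :=
  ‖LinearMap.toContinuousLinearMap (Matrix.toEuclideanLin M)‖

/-- Shifted transfer function `C ((iω − λ)I − A)⁻¹ B` evaluated on the line `Re s = −λ`. -/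
noncomputable def shiftedTF {n m l : ℕ} (A : Matrix (Fin n) (Fin n) ℝ)
    (B : Matrix (Fin n) (Fin m) ℝ) (C : Matrix (Fin l) (Fin n) ℝ) (lam ω : ℝ) :
    Matrix (Fin l) (Fin m) ℂ :=
  (C.map Complex.ofReal) *
    ((((ω : ℂ) * Complex.I - (lam : ℂ)) • (1 : Matrix (Fin n) (Fin n) ℂ)
      - A.map Complex.ofReal)⁻¹) *
    (B.map Complex.ofReal)

/-- Closed-loop vector field of the negative feedback interconnection `u₁ = −y₂`,
`u₂ = y₁` of `ẋ₁ = f₁(x₁) + B₁u₁, y₁ = C₁x₁` and `ẋ₂ = f₂(x₂) + B₂u₂, y₂ = C₂x₂`. -/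
noncomputable def closedLoopField {n₁ n₂ m₁ m₂ : ℕ}
    (f₁ : (Fin n₁ → ℝ) → (Fin n₁ → ℝ)) (f₂ : (Fin n₂ → ℝ) → (Fin n₂ → ℝ))
    (B₁ : Matrix (Fin n₁) (Fin m₁) ℝ) (C₁ : Matrix (Fin m₂) (Fin n₁) ℝ)
    (B₂ : Matrix (Fin n₂) (Fin m₂) ℝ) (C₂ : Matrix (Fin m₁) (Fin n₂) ℝ)
    (x : Fin n₁ ⊕ Fin n₂ → ℝ) : Fin n₁ ⊕ Fin n₂ → ℝ :=
  Sum.elim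
    (f₁ (x ∘ Sum.inl) - (B₁ * C₂).mulVec (x ∘ Sum.inr))
    (f₂ (x ∘ Sum.inr) + (B₂ * C₁).mulVec (x ∘ Sum.inl))

/-! Take `P = diag(P₁, d • P₂)` with `d = γ₁ / γ₂`; scaling by `d > 0` keeps the signs of the
eigenvalues, so `P` has inertia `(p₁ + p₂, 0, n₁ + n₂ - p₁ - p₂)`. The Jacobian of the closed
loop is the block matrix `[[Df₁, -B₁C₂], [B₂C₁, Df₂]]`. Evaluating the first LMI at
`(δx₁, -C₂δx₂)` and the second at `(δx₂, C₁δx₁)`, the cross terms `2 (Bᵢuᵢ)ᵀPᵢδxᵢ` are exactly the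
contribution of the off-diagonal blocks, so adding the first inequality to `d` times the second
bounds the closed-loop form by `-ε₁|δx₁|² - dε₂|δx₂|²` plus the supply
`(dγ₂² - 1)|C₁δx₁|² + (γ₁² - d)|C₂δx₂|²`, which is nonpositive since `γ₁² ≤ d ≤ 1 / γ₂²`. -/

theorem Matrix.charpoly_smul_eq_scaleRoots {K n : Type*} [Field K] [Infinite K] [Fintype n]
    [DecidableEq n] (M : Matrix n n K) {c : K} (hc : c ≠ 0) :
    (c • M).charpoly = M.charpoly.scaleRoots c := by
  refine Polynomial.funext fun z => ?_
  have hz : z = c * (c⁻¹ * z) := by field_simp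
  conv_rhs => rw [hz]
  rw [eval_charpoly, scaleRoots_eval_mul, eval_charpoly, charpoly_natDegree_eq_dim, ← det_smul,
    smul_sub, scalar_apply, scalar_apply, ← diagonal_smul]
  congr 3
  funext
  simp [← hz]

theorem eigCount_smul {n : Type*} [Fintype n] [DecidableEq n] (M : Matrix n n ℝ) {c : ℝ}
    (hc : c ≠ 0) (p : ℂ → Prop) : eigCount (c • M) p = eigCount M (fun z => p (c * z)) := by
  rw [eigCount, eigCount, Matrix.map_smul' _ _ _ Complex.ofReal_mul,
    charpoly_smul_eq_scaleRoots _ (by exact_mod_cast hc),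
    roots_scaleRoots _ (IsUnit.mk0 _ (by exact_mod_cast hc)), Multiset.filter_map,
    Multiset.card_map]
  rfl

theorem eigCount_fromBlocks_zero {n₁ n₂ : Type*} [Fintype n₁] [DecidableEq n₁] [Fintype n₂]
    [DecidableEq n₂] (A : Matrix n₁ n₁ ℝ) (D : Matrix n₂ n₂ ℝ) (p : ℂ → Prop) :
    eigCount (fromBlocks A 0 0 D) p = eigCount A p + eigCount D p := by
  rw [eigCount, fromBlocks_map, Matrix.map_zero _ Complex.ofReal_zero,
    Matrix.map_zero _ Complex.ofReal_zero,
    charpoly_fromBlocks_zero₂₁, roots_mul ((charpoly_monic _).mul (charpoly_monic _)).ne_zero,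
    Multiset.filter_add, Multiset.card_add]
  rfl

theorem hasInertia_smul {n : Type*} [Fintype n] [DecidableEq n] {P : Matrix n n ℝ} {neg pos : ℕ}
    (hP : hasInertia P neg pos) {c : ℝ} (hc : 0 < c) : hasInertia (c • P) neg pos := by
  simpa [hasInertia, eigCount_smul P hc.ne', Complex.re_ofReal_mul, mul_neg_iff, hc, hc.ne',
    not_lt.2 hc.le, mul_pos_iff_of_pos_left hc] using hP

theorem hasInertia_fromBlocks {n₁ n₂ : Type*} [Fintype n₁] [DecidableEq n₁] [Fintype n₂]
    [DecidableEq n₂] {A : Matrix n₁ n₁ ℝ} {D : Matrix n₂ n₂ ℝ} {neg₁ pos₁ neg₂ pos₂ : ℕ}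
    (hA : hasInertia A neg₁ pos₁) (hD : hasInertia D neg₂ pos₂) :
    hasInertia (fromBlocks A 0 0 D) (neg₁ + neg₂) (pos₁ + pos₂) := by
  obtain ⟨hA₁, hA₂, hA₃⟩ := hA
  obtain ⟨hD₁, hD₂, hD₃⟩ := hD
  exact ⟨by rw [eigCount_fromBlocks_zero, hA₁, hD₁], by rw [eigCount_fromBlocks_zero, hA₂, hD₂],
    by rw [eigCount_fromBlocks_zero, hA₃, hD₃]⟩

theorem jacobian_mulVec {n : Type*} [Fintype n] [DecidableEq n] (f : (n → ℝ) → (n → ℝ))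
    (x v : n → ℝ) : jacobian f x *ᵥ v = fderiv ℝ f x v := by
  rw [jacobian, ← Matrix.toLin'_apply, Matrix.toLin'_toMatrix']
  rfl

theorem jacobian_eq_of_hasFDerivAt {n : Type*} [Fintype n] [DecidableEq n]
    {f : (n → ℝ) → (n → ℝ)} {M : Matrix n n ℝ} {x : n → ℝ}
    (h : HasFDerivAt f (Matrix.toLin' M).toContinuousLinearMap x) : jacobian f x = M := by
  rw [jacobian, h.fderiv]
  exact LinearMap.toMatrix'_toLin' M

theorem jacobian_closedLoopField {n₁ n₂ m₁ m₂ : ℕ}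
    {f₁ : (Fin n₁ → ℝ) → (Fin n₁ → ℝ)} {f₂ : (Fin n₂ → ℝ) → (Fin n₂ → ℝ)}
    (B₁ : Matrix (Fin n₁) (Fin m₁) ℝ) (C₁ : Matrix (Fin m₂) (Fin n₁) ℝ)
    (B₂ : Matrix (Fin n₂) (Fin m₂) ℝ) (C₂ : Matrix (Fin m₁) (Fin n₂) ℝ)
    {x : Fin n₁ ⊕ Fin n₂ → ℝ} (h₁ : DifferentiableAt ℝ f₁ (x ∘ Sum.inl))
    (h₂ : DifferentiableAt ℝ f₂ (x ∘ Sum.inr)) :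
    jacobian (closedLoopField f₁ f₂ B₁ C₁ B₂ C₂) x =
      fromBlocks (jacobian f₁ (x ∘ Sum.inl)) (-(B₁ * C₂)) (B₂ * C₁)
        (jacobian f₂ (x ∘ Sum.inr)) := by
  let π₁ : (Fin n₁ ⊕ Fin n₂ → ℝ) →L[ℝ] (Fin n₁ → ℝ) :=
    ContinuousLinearMap.pi fun i => ContinuousLinearMap.proj (Sum.inl i)
  let π₂ : (Fin n₁ ⊕ Fin n₂ → ℝ) →L[ℝ] (Fin n₂ → ℝ) :=
    ContinuousLinearMap.pi fun j => ContinuousLinearMap.proj (Sum.inr j)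
  have hF₁ := (h₁.hasFDerivAt.comp x π₁.hasFDerivAt).sub
    ((Matrix.toLin' (B₁ * C₂)).toContinuousLinearMap.comp π₂).hasFDerivAt
  have hF₂ := (h₂.hasFDerivAt.comp x π₂.hasFDerivAt).add
    ((Matrix.toLin' (B₂ * C₁)).toContinuousLinearMap.comp π₁).hasFDerivAt
  apply jacobian_eq_of_hasFDerivAt
  refine hasFDerivAt_pi'' fun k => ?_
  rcases k with i | j
  · convert hasFDerivAt_pi'.1 hF₁ i using 1
    · rfl
    ext v
    simp [fromBlocks_mulVec, jacobian_mulVec, π₁, π₂, Function.comp_def, sub_eq_add_neg, neg_mulVec]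
  · convert hasFDerivAt_pi'.1 hF₂ j using 1
    · rfl
    ext v
    simp [fromBlocks_mulVec, jacobian_mulVec, π₁, π₂, Function.comp_def, add_comm]

section QuadraticForms

variable {n : Type*} [Fintype n]

theorem dotProduct_mulVec_of_transpose_eq {P : Matrix n n ℝ} (hP : Pᵀ = P) (v w : n → ℝ) :
    v ⬝ᵥ (P *ᵥ w) = (P *ᵥ v) ⬝ᵥ w := by
  conv_lhs => rw [← hP]
  rw [dotProduct_transpose_mulVec, dotProduct_comm]

theorem dotProduct_transpose_mul_add_mul_mulVec (J : Matrix n n ℝ) {P : Matrix n n ℝ}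
    (hP : Pᵀ = P) (v : n → ℝ) :
    v ⬝ᵥ ((Jᵀ * P + P * J) *ᵥ v) = 2 * ((J *ᵥ v) ⬝ᵥ (P *ᵥ v)) := by
  rw [add_mulVec, dotProduct_add, ← mulVec_mulVec, ← mulVec_mulVec, dotProduct_transpose_mulVec,
    dotProduct_mulVec_of_transpose_eq hP, dotProduct_comm (P *ᵥ v)]
  ring

variable [DecidableEq n] {m l : Type*} [Fintype m] [DecidableEq m] [Fintype l]

theorem dissipation_of_posSemidef_neg_fromBlocks {J P : Matrix n n ℝ} (hP : Pᵀ = P)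
    {B : Matrix n m ℝ} {C : Matrix l n ℝ} {lam ε γ : ℝ}
    (hLMI : (-(fromBlocks (Jᵀ * P + P * J + (2 * lam) • P + ε • 1 + Cᵀ * C) (P * B) (Bᵀ * P)
      (-(γ ^ 2) • (1 : Matrix m m ℝ)))).PosSemidef) (v : n → ℝ) (u : m → ℝ) :
    2 * ((J *ᵥ v + B *ᵥ u) ⬝ᵥ (P *ᵥ v)) + 2 * lam * (v ⬝ᵥ (P *ᵥ v)) ≤
      γ ^ 2 * (u ⬝ᵥ u) - (C *ᵥ v) ⬝ᵥ (C *ᵥ v) - ε * (v ⬝ᵥ v) := by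
  have h := hLMI.dotProduct_mulVec_nonneg (Sum.elim v u)
  simp only [star_trivial, neg_mulVec, dotProduct_neg, fromBlocks_mulVec, Sum.elim_comp_inl,
    Sum.elim_comp_inr, sumElim_dotProduct_sumElim, add_mulVec, dotProduct_add,
    smul_mulVec, one_mulVec, dotProduct_smul, smul_eq_mul, ← mulVec_mulVec,
    dotProduct_transpose_mulVec] at h
  rw [dotProduct_mulVec_of_transpose_eq hP v (J *ᵥ v),
    dotProduct_mulVec_of_transpose_eq hP v (B *ᵥ u)] at h
  rw [add_dotProduct, dotProduct_comm (J *ᵥ v), dotProduct_comm (B *ᵥ u)]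
  linarith

end QuadraticForms

theorem posSemidef_neg_smul_one_sub_of_dotProduct_mulVec_le {n : Type*} [Fintype n]
    [DecidableEq n] {Q : Matrix n n ℝ} (hQ : Qᵀ = Q) {ε : ℝ}
    (h : ∀ v, v ⬝ᵥ (Q *ᵥ v) ≤ -(ε * (v ⬝ᵥ v))) : (-(ε • 1) - Q).PosSemidef := by
  refine PosSemidef.of_dotProduct_mulVec_nonneg ?_ fun v => ?_
  · simp [IsHermitian, conjTranspose_eq_transpose_of_trivial, hQ]
  · simp only [star_trivial, sub_mulVec, neg_mulVec, smul_mulVec, one_mulVec, dotProduct_sub,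
      dotProduct_neg, dotProduct_smul, smul_eq_mul]
    linarith [h v]

section SmallGain

variable {n₁ n₂ m₁ m₂ : Type*} [Fintype n₁] [DecidableEq n₁] [Fintype n₂] [DecidableEq n₂]
  [Fintype m₁] [DecidableEq m₁] [Fintype m₂] [DecidableEq m₂]

theorem dotProduct_mulVec_feedback_le {J₁ P₁ : Matrix n₁ n₁ ℝ} {J₂ P₂ : Matrix n₂ n₂ ℝ}
    (hP₁ : P₁ᵀ = P₁) (hP₂ : P₂ᵀ = P₂) {B₁ : Matrix n₁ m₁ ℝ} {C₁ : Matrix m₂ n₁ ℝ}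
    {B₂ : Matrix n₂ m₂ ℝ} {C₂ : Matrix m₁ n₂ ℝ} {lam ε₁ ε₂ γ₁ γ₂ d ε : ℝ}
    (hLMI₁ : (-(fromBlocks (J₁ᵀ * P₁ + P₁ * J₁ + (2 * lam) • P₁ + ε₁ • 1 + C₁ᵀ * C₁)
      (P₁ * B₁) (B₁ᵀ * P₁) (-(γ₁ ^ 2) • (1 : Matrix m₁ m₁ ℝ)))).PosSemidef)
    (hLMI₂ : (-(fromBlocks (J₂ᵀ * P₂ + P₂ * J₂ + (2 * lam) • P₂ + ε₂ • 1 + C₂ᵀ * C₂)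
      (P₂ * B₂) (B₂ᵀ * P₂) (-(γ₂ ^ 2) • (1 : Matrix m₂ m₂ ℝ)))).PosSemidef)
    (hγ₁ : γ₁ ^ 2 ≤ d) (hγ₂ : d * γ₂ ^ 2 ≤ 1) (hε₁ : ε ≤ ε₁) (hε₂ : ε ≤ d * ε₂)
    (v : n₁ ⊕ n₂ → ℝ) :
    v ⬝ᵥ (((fromBlocks J₁ (-(B₁ * C₂)) (B₂ * C₁) J₂)ᵀ * fromBlocks P₁ 0 0 (d • P₂) +
        fromBlocks P₁ 0 0 (d • P₂) * fromBlocks J₁ (-(B₁ * C₂)) (B₂ * C₁) J₂ +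
        (2 * lam) • fromBlocks P₁ 0 0 (d • P₂)) *ᵥ v) ≤ -(ε * (v ⬝ᵥ v)) := by
  obtain ⟨v₁, v₂, rfl⟩ : ∃ v₁ v₂, v = Sum.elim v₁ v₂ := ⟨_, _, (Sum.elim_comp_inl_inr v).symm⟩
  have hd : 0 ≤ d := (sq_nonneg γ₁).trans hγ₁
  have hP : (fromBlocks P₁ 0 0 (d • P₂))ᵀ = fromBlocks P₁ 0 0 (d • P₂) := by
    simp [fromBlocks_transpose, hP₁, hP₂]
  have h₁ := dissipation_of_posSemidef_neg_fromBlocks hP₁ hLMI₁ v₁ (-(C₂ *ᵥ v₂))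
  have h₂ := mul_le_mul_of_nonneg_left
    (dissipation_of_posSemidef_neg_fromBlocks hP₂ hLMI₂ v₂ (C₁ *ᵥ v₁)) hd
  have hy₁ := mul_nonneg (sub_nonneg.2 hγ₂) (by simpa using dotProduct_star_self_nonneg (C₁ *ᵥ v₁))
  have hy₂ := mul_nonneg (sub_nonneg.2 hγ₁) (by simpa using dotProduct_star_self_nonneg (C₂ *ᵥ v₂))
  have hx₁ := mul_nonneg (sub_nonneg.2 hε₁) (by simpa using dotProduct_star_self_nonneg v₁)
  have hx₂ := mul_nonneg (sub_nonneg.2 hε₂) (by simpa using dotProduct_star_self_nonneg v₂)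
  rw [add_mulVec, dotProduct_add, dotProduct_transpose_mul_add_mul_mulVec _ hP]
  simp only [fromBlocks_mulVec, Sum.elim_comp_inl, Sum.elim_comp_inr, sumElim_dotProduct_sumElim,
    zero_mulVec, add_zero, zero_add, smul_mulVec, dotProduct_smul, smul_eq_mul, neg_mulVec,
    ← mulVec_mulVec, mulVec_neg, dotProduct_neg, neg_dotProduct, neg_neg, add_dotProduct] at h₁ h₂ ⊢
  linarith

end SmallGain

theorem statement5_general {n₁ n₂ m₁ m₂ p₁ p₂ : ℕ} (hp₁ : p₁ ≤ n₁) (hp₂ : p₂ ≤ n₂)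
    (f₁ : (Fin n₁ → ℝ) → (Fin n₁ → ℝ)) (hf₁ : ContDiff ℝ 1 f₁)
    (f₂ : (Fin n₂ → ℝ) → (Fin n₂ → ℝ)) (hf₂ : ContDiff ℝ 1 f₂)
    (B₁ : Matrix (Fin n₁) (Fin m₁) ℝ) (C₁ : Matrix (Fin m₂) (Fin n₁) ℝ)
    (B₂ : Matrix (Fin n₂) (Fin m₂) ℝ) (C₂ : Matrix (Fin m₁) (Fin n₂) ℝ)
    (lam γ₁ γ₂ ε₁ ε₂ : ℝ)
    (hγ₁ : 0 < γ₁) (hγ₂ : 0 < γ₂) (hε₁ : 0 < ε₁) (hε₂ : 0 < ε₂)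
    (P₁ : Matrix (Fin n₁) (Fin n₁) ℝ) (hP₁symm : P₁ᵀ = P₁)
    (hP₁inertia : hasInertia P₁ p₁ (n₁ - p₁))
    (P₂ : Matrix (Fin n₂) (Fin n₂) ℝ) (hP₂symm : P₂ᵀ = P₂)
    (hP₂inertia : hasInertia P₂ p₂ (n₂ - p₂))
    (hLMI₁ : ∀ x : Fin n₁ → ℝ,
      (-(Matrix.fromBlocks
        ((jacobian f₁ x)ᵀ * P₁ + P₁ * jacobian f₁ x + (2 * lam) • P₁ + ε₁ • 1 + C₁ᵀ * C₁)
        (P₁ * B₁) (B₁ᵀ * P₁)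
        (-(γ₁ ^ 2) • (1 : Matrix (Fin m₁) (Fin m₁) ℝ)))).PosSemidef)
    (hLMI₂ : ∀ x : Fin n₂ → ℝ,
      (-(Matrix.fromBlocks
        ((jacobian f₂ x)ᵀ * P₂ + P₂ * jacobian f₂ x + (2 * lam) • P₂ + ε₂ • 1 + C₂ᵀ * C₂)
        (P₂ * B₂) (B₂ᵀ * P₂)
        (-(γ₂ ^ 2) • (1 : Matrix (Fin m₂) (Fin m₂) ℝ)))).PosSemidef)
    (hsg : γ₁ * γ₂ < 1) :
    ∃ (ε : ℝ) (P : Matrix (Fin n₁ ⊕ Fin n₂) (Fin n₁ ⊕ Fin n₂) ℝ), 0 < ε ∧ Pᵀ = P ∧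
      hasInertia P (p₁ + p₂) (n₁ + n₂ - (p₁ + p₂)) ∧
      ∀ x : Fin n₁ ⊕ Fin n₂ → ℝ,
        ((-(ε • (1 : Matrix (Fin n₁ ⊕ Fin n₂) (Fin n₁ ⊕ Fin n₂) ℝ))) -
          ((jacobian (closedLoopField f₁ f₂ B₁ C₁ B₂ C₂) x)ᵀ * P +
            P * jacobian (closedLoopField f₁ f₂ B₁ C₁ B₂ C₂) x +
            (2 * lam) • P)).PosSemidef := by
  set d := γ₁ / γ₂
  have hd : 0 < d := div_pos hγ₁ hγ₂
  have hdγ₁ : γ₁ ^ 2 ≤ d := by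
    rw [le_div_iff₀ hγ₂]
    nlinarith
  have hdγ₂ : d * γ₂ ^ 2 ≤ 1 := by
    calc d * γ₂ ^ 2 = γ₁ * γ₂ := by rw [sq, ← mul_assoc, div_mul_cancel₀ γ₁ hγ₂.ne']
      _ ≤ 1 := hsg.le
  set P := fromBlocks P₁ 0 0 (d • P₂)
  have hP : Pᵀ = P := by simp [P, fromBlocks_transpose, hP₁symm, hP₂symm]
  refine ⟨min ε₁ (d * ε₂), P, lt_min hε₁ (mul_pos hd hε₂), hP, ?_, fun x => ?_⟩
  · rw [show n₁ + n₂ - (p₁ + p₂) = n₁ - p₁ + (n₂ - p₂) by omega]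
    exact hasInertia_fromBlocks hP₁inertia (hasInertia_smul hP₂inertia hd)
  · rw [jacobian_closedLoopField B₁ C₁ B₂ C₂ (hf₁.differentiable one_ne_zero _)
      (hf₂.differentiable one_ne_zero _)]
    refine posSemidef_neg_smul_one_sub_of_dotProduct_mulVec_le (by simp [hP, add_comm]) ?_
    exact dotProduct_mulVec_feedback_le hP₁symm hP₂symm (hLMI₁ _) (hLMI₂ _) hdγ₁ hdγ₂
      (min_le_left _ _) (min_le_right _ _)

/-- (Small-gain theorem for `p`-dominance.) If `Σᵢ` (for `i = 1, 2`)
has strict differential `L_{2,pᵢ}` gain less than `γᵢ` with rate `λ`, certified by a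
symmetric `Pᵢ` with inertia `(pᵢ, 0, nᵢ − pᵢ)`, and `γ₁γ₂ < 1`, then the closed-loop
system obtained from the feedback interconnection `u₁ = −y₂`, `u₂ = y₁` is strictly
`(p₁ + p₂)`-dominant with rate `λ`. -/
theorem statement5 {n₁ n₂ m₁ m₂ p₁ p₂ : ℕ} (hp₁ : p₁ ≤ n₁) (hp₂ : p₂ ≤ n₂)
    (f₁ : (Fin n₁ → ℝ) → (Fin n₁ → ℝ)) (hf₁ : ContDiff ℝ 1 f₁)
    (f₂ : (Fin n₂ → ℝ) → (Fin n₂ → ℝ)) (hf₂ : ContDiff ℝ 1 f₂)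
    (B₁ : Matrix (Fin n₁) (Fin m₁) ℝ) (C₁ : Matrix (Fin m₂) (Fin n₁) ℝ)
    (B₂ : Matrix (Fin n₂) (Fin m₂) ℝ) (C₂ : Matrix (Fin m₁) (Fin n₂) ℝ)
    (lam γ₁ γ₂ ε₁ ε₂ : ℝ) (hlam : 0 ≤ lam)
    (hγ₁ : 0 < γ₁) (hγ₂ : 0 < γ₂) (hε₁ : 0 < ε₁) (hε₂ : 0 < ε₂)
    (P₁ : Matrix (Fin n₁) (Fin n₁) ℝ) (hP₁symm : P₁ᵀ = P₁)
    (hP₁inertia : hasInertia P₁ p₁ (n₁ - p₁))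
    (P₂ : Matrix (Fin n₂) (Fin n₂) ℝ) (hP₂symm : P₂ᵀ = P₂)
    (hP₂inertia : hasInertia P₂ p₂ (n₂ - p₂))
    (hLMI₁ : ∀ x : Fin n₁ → ℝ,
      (-(Matrix.fromBlocks
        ((jacobian f₁ x)ᵀ * P₁ + P₁ * jacobian f₁ x + (2 * lam) • P₁ + ε₁ • 1 + C₁ᵀ * C₁)
        (P₁ * B₁) (B₁ᵀ * P₁)
        (-(γ₁ ^ 2) • (1 : Matrix (Fin m₁) (Fin m₁) ℝ)))).PosSemidef)
    (hLMI₂ : ∀ x : Fin n₂ → ℝ,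
      (-(Matrix.fromBlocks
        ((jacobian f₂ x)ᵀ * P₂ + P₂ * jacobian f₂ x + (2 * lam) • P₂ + ε₂ • 1 + C₂ᵀ * C₂)
        (P₂ * B₂) (B₂ᵀ * P₂)
        (-(γ₂ ^ 2) • (1 : Matrix (Fin m₂) (Fin m₂) ℝ)))).PosSemidef)
    (hsg : γ₁ * γ₂ < 1) :
    ∃ (ε : ℝ) (P : Matrix (Fin n₁ ⊕ Fin n₂) (Fin n₁ ⊕ Fin n₂) ℝ), 0 < ε ∧ Pᵀ = P ∧
      hasInertia P (p₁ + p₂) (n₁ + n₂ - (p₁ + p₂)) ∧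
      ∀ x : Fin n₁ ⊕ Fin n₂ → ℝ,
        ((-(ε • (1 : Matrix (Fin n₁ ⊕ Fin n₂) (Fin n₁ ⊕ Fin n₂) ℝ))) -
          ((jacobian (closedLoopField f₁ f₂ B₁ C₁ B₂ C₂) x)ᵀ * P +
            P * jacobian (closedLoopField f₁ f₂ B₁ C₁ B₂ C₂) x +
            (2 * lam) • P)).PosSemidef :=
  statement5_general hp₁ hp₂ f₁ hf₁ f₂ hf₂ B₁ C₁ B₂ C₂ lam γ₁ γ₂ ε₁ ε₂ hγ₁ hγ₂ hε₁ hε₂ P₁ hP₁symm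
    hP₁inertia P₂ hP₂symm hP₂inertia hLMI₁ hLMI₂ hsg
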